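/- arXiv:1609.04005 — 2 statements merged into one kernel-verified Lean document; each statement's English description precedes it below -/
import Mathlib

section
/- Let P, Q ⊆ 2^ω be perfect sets with Q ⊆ P and let A ⊆ Q. Then the μ_P-outer measure of A is at most the μ_Q-outer measure of A. In particular, every Q-null set A ⊆ Q is also P-null. -/
open MeasureTheory Set Pointwise

/-- The Cantor space `2^ω`, a compact topological group under coordinatewise
addition mod 2. -/
abbrev CS := ℕ → ZMod 2

/-- The basic clopen set `[w]` determined by a finite binary sequence `w`:
all `x ∈ 2^ω` extending `w`. -/
def cyl (w : List (ZMod 2)) : Set CS := {x | ∀ i, i < w.length → x i = w.getD i 0}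

/-- `w` is a branching node of `P`: both `[w⌢0] ∩ P` and `[w⌢1] ∩ P` are nonempty. -/
def Branch (P : Set CS) (w : List (ZMod 2)) : Prop :=
  (cyl (w ++ [0]) ∩ P).Nonempty ∧ (cyl (w ++ [1]) ∩ P).Nonempty

/-- A perfect subset of Cantor space: nonempty, closed, with no isolated points. -/
def PerfSet (P : Set CS) : Prop := Perfect P ∧ P.Nonempty

/-- `ν` is a canonical measure of the perfect set `P`: a Borel probability measure with
`ν P = 1` and `ν [w⌢0] = ν [w⌢1]` for every branching node `w` of `P`. -/
def IsCanonical (P : Set CS) (ν : Measure CS) : Prop :=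
  IsProbabilityMeasure ν ∧ ν P = 1 ∧
    ∀ w : List (ZMod 2), Branch P w → ν (cyl (w ++ [0])) = ν (cyl (w ++ [1]))

/-- `A` is `P`-null: the `μ_P`-outer measure of `A ∩ P` is `0`
(quantified over all canonical measures of `P`). -/
def PNull (P A : Set CS) : Prop := ∀ ν : Measure CS, IsCanonical P ν → ν (A ∩ P) = 0

/-- `A` is `P`-measurable: `A ∩ P` differs from a Borel set by a `P`-null set,
i.e. it is null-measurable with respect to the canonical measure of `P`. -/
def PMeasurable (P A : Set CS) : Prop :=
  ∀ ν : Measure CS, IsCanonical P ν → NullMeasurableSet (A ∩ P) ν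

/-- `X` is perfectly null: `P`-null for every perfect set `P`. -/
def PerfectlyNull (X : Set CS) : Prop := ∀ P, PerfSet P → PNull P X

/-- `μ` is the fair-coin (Lebesgue product) measure on `2^ω`:
a Borel probability measure with `μ [w] = 2^{-|w|}` for every finite binary sequence. -/
def IsFairCoin (μ : Measure CS) : Prop :=
  IsProbabilityMeasure μ ∧ ∀ w : List (ZMod 2), μ (cyl w) = (2 : ENNReal)⁻¹ ^ w.length

/-- The number of branching nodes of `P` that are proper initial segments of `v`. -/
noncomputable def brCount (P : Set CS) (v : List (ZMod 2)) : ℕ :=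
  Set.ncard {u : List (ZMod 2) | u <+: v ∧ u ≠ v ∧ Branch P u}

/-- A balanced perfect set: branching nodes of strictly smaller level
are strictly shorter. -/
def BalancedPerf (P : Set CS) : Prop :=
  PerfSet P ∧ ∀ v w : List (ZMod 2), Branch P v → Branch P w →
    brCount P v < brCount P w → v.length < w.length

/-- A uniformly perfect set: on each length, either all nodes meeting `P` branch,
or none does. -/
def UniformlyPerf (P : Set CS) : Prop :=
  PerfSet P ∧ ∀ n : ℕ,
    (∀ w : List (ZMod 2), w.length = n → (cyl w ∩ P).Nonempty → Branch P w) ∨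
    (∀ w : List (ZMod 2), w.length = n → ¬ Branch P w)

/-- A Silver perfect set: determined by a partial function `ℕ ⇀ 2`
whose domain has infinite complement. -/
def SilverPerf (P : Set CS) : Prop :=
  ∃ f : ℕ → Option (ZMod 2), {n | f n = none}.Infinite ∧
    P = {x | ∀ n b, f n = some b → x n = b}

/-- A Marczewski null (`s₀`) set. -/
def S0Set (X : Set CS) : Prop :=
  ∀ P, PerfSet P → ∃ Q, PerfSet Q ∧ Q ⊆ P ∧ Q ∩ X = ∅

/-- `S` is a Sierpiński set with respect to the measure `μ`: uncountable, with
countable intersection with every `μ`-null set. -/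
def Sierpinski (μ : Measure CS) (S : Set CS) : Prop :=
  ¬ S.Countable ∧ ∀ N : Set CS, μ N = 0 → (S ∩ N).Countable

/-- The interleaving homeomorphism `h : 2^ω × 2^ω → 2^ω`,
`h(x,y) = ⟨x 0, y 0, x 1, y 1, …⟩`. -/
def interleave (p : CS × CS) : CS := fun n => if n % 2 = 0 then p.1 (n / 2) else p.2 (n / 2)

/-- `X` is universally null: outer measure zero with respect to every finite diffused
Borel measure on `2^ω`. -/
def UniversallyNull (X : Set CS) : Prop :=
  ∀ μ : Measure CS, IsFiniteMeasure μ → (∀ x : CS, μ {x} = 0) → μ X = 0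

/-- `X` is strongly null: for every sequence of positive `ε n` there are sets `A n` of
diameter `< ε n` (with respect to the standard metric `d(x,y) = 2^{-min{n : x n ≠ y n}}`,
expressed combinatorially) covering `X`. -/
def StronglyNull (X : Set CS) : Prop :=
  ∀ ε : ℕ → ℝ, (∀ n, 0 < ε n) → ∃ A : ℕ → Set CS,
    (∀ n, ∃ N : ℕ, (2 : ℝ)⁻¹ ^ N < ε n ∧ ∀ x ∈ A n, ∀ y ∈ A n, ∀ i < N, x i = y i) ∧
    X ⊆ ⋃ n, A n

/-- `X` is perfectly null in the transitive sense: for every perfect `P` there is a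
`G_δ` set `G ⊇ X` with `(G + t) ∩ P` being `P`-null for every `t`. -/
def PNPrime (X : Set CS) : Prop :=
  ∀ P, PerfSet P → ∃ G : Set CS, IsGδ G ∧ X ⊆ G ∧
    ∀ t : CS, PNull P ((fun g => g + t) '' G)

/-!
Walking down the tree of `Q`, `μ_P` halves at every branching node of `Q` (which also branches in
`P`), while `μ_Q` halves there too and loses nothing at a node where `Q` does not branch. Hence
`μ_P [w] ≤ μ_Q [w]` for every cylinder meeting `Q`, and since open sets are disjoint unions of
cylinders, outer regularity gives `μ_P|Q ≤ μ_Q`.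

For the null-set statement a canonical measure of `Q` must exist: push the Haar measure forward
along the map that walks down the tree of `Q`, following the coin `x n` at a branching node of
length `n`; flipping that one coin swaps the two halves below the node.
-/

lemma zmod_two_eq_zero_or_eq_one (c : ZMod 2) : c = 0 ∨ c = 1 := by
  revert c; decide

def word (x : CS) (n : ℕ) : List (ZMod 2) := List.ofFn fun i : Fin n => x i

@[simp] lemma length_word (x : CS) (n : ℕ) : (word x n).length = n := List.length_ofFn

lemma word_succ (x : CS) (n : ℕ) : word x (n + 1) = word x n ++ [x n] := by
  rw [word, word, List.ofFn_succ', List.concat_eq_append]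
  rfl

lemma word_congr {x y : CS} {n : ℕ} (h : ∀ i < n, x i = y i) : word x n = word y n := by
  simp only [word, List.ofFn_inj]
  exact funext fun i => h i i.2

lemma mem_cyl_iff_word_eq {x : CS} {w : List (ZMod 2)} : x ∈ cyl w ↔ word x w.length = w := by
  constructor
  · intro hx
    refine List.ext_getElem (by simp) fun i _ hi => ?_
    have := hx i hi
    rw [List.getD_eq_getElem _ _ hi] at this
    simpa [word] using this
  · rintro hw i hi
    rw [← hw]
    simp [word, hi]

lemma mem_cyl_word_iff {x y : CS} {n : ℕ} : y ∈ cyl (word x n) ↔ ∀ i < n, y i = x i := by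
  simp [mem_cyl_iff_word_eq, word, List.ofFn_inj, funext_iff, Fin.forall_iff]

lemma mem_cyl_word (x : CS) (n : ℕ) : x ∈ cyl (word x n) :=
  mem_cyl_word_iff.2 fun _ _ => rfl

lemma mem_cyl_append_iff {x : CS} {w : List (ZMod 2)} {b : ZMod 2} :
    x ∈ cyl (w ++ [b]) ↔ x ∈ cyl w ∧ x w.length = b := by
  simp only [mem_cyl_iff_word_eq, List.length_append, List.length_singleton, word_succ]
  constructor
  · intro h
    obtain ⟨h₁, h₂⟩ := List.append_inj' h rfl
    exact ⟨h₁, List.singleton_inj.1 h₂⟩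
  · rintro ⟨h₁, h₂⟩
    rw [h₁, h₂]

lemma cyl_append_subset (w : List (ZMod 2)) (b : ZMod 2) : cyl (w ++ [b]) ⊆ cyl w :=
  fun _ hx => (mem_cyl_append_iff.1 hx).1

lemma cyl_nil : cyl [] = univ := by
  ext x
  simp [cyl]

lemma cyl_eq_union (w : List (ZMod 2)) : cyl w = cyl (w ++ [0]) ∪ cyl (w ++ [1]) := by
  ext x
  simp only [mem_union, mem_cyl_append_iff]
  rcases zmod_two_eq_zero_or_eq_one (x w.length) with h | h <;> simp [h]

lemma disjoint_cyl_append (w : List (ZMod 2)) : Disjoint (cyl (w ++ [0])) (cyl (w ++ [1])) :=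
  Set.disjoint_left.2 fun _ h₀ h₁ =>
    zero_ne_one ((mem_cyl_append_iff.1 h₀).2.symm.trans (mem_cyl_append_iff.1 h₁).2)

lemma isOpen_cyl (w : List (ZMod 2)) : IsOpen (cyl w) := by
  have : cyl w = ⋂ i ∈ Iio w.length, (fun x : CS => x i) ⁻¹' {w.getD i 0} := by
    ext x
    simp [cyl]
  rw [this]
  exact (finite_Iio _).isOpen_biInter fun i _ => (isOpen_discrete _).preimage (continuous_apply i)

lemma measurableSet_cyl (w : List (ZMod 2)) : MeasurableSet (cyl w) :=
  (isOpen_cyl w).measurableSet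

lemma exists_cyl_word_subset {U : Set CS} (hU : IsOpen U) {x : CS} (hx : x ∈ U) :
    ∃ n, cyl (word x n) ⊆ U := by
  obtain ⟨I, u, hI, hsub⟩ := isOpen_pi_iff.1 hU x hx
  refine ⟨I.sup id + 1, fun y hy => hsub fun a ha => ?_⟩
  rw [mem_cyl_word_iff.1 hy a (Nat.lt_succ_of_le (I.le_sup (f := id) ha))]
  exact (hI a ha).2

lemma IsOpen.exists_pairwiseDisjoint_cyl {U : Set CS} (hU : IsOpen U) :
    ∃ W : Set (List (ZMod 2)), W.PairwiseDisjoint cyl ∧ U = ⋃ w ∈ W, cyl w := by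
  classical
  refine ⟨{w | cyl w ⊆ U ∧ ∀ x ∈ cyl w, ∀ k < w.length, ¬ cyl (word x k) ⊆ U}, ?_, ?_⟩
  · intro w hw w' hw' hne
    refine Set.disjoint_left.2 fun x hx hx' => ?_
    have hxw := mem_cyl_iff_word_eq.1 hx
    have hxw' := mem_cyl_iff_word_eq.1 hx'
    rcases lt_trichotomy w.length w'.length with h | h | h
    · exact hw'.2 x hx' _ h (by rw [hxw]; exact hw.1)
    · exact hne (hxw.symm.trans (h ▸ hxw'))
    · exact hw.2 x hx _ h (by rw [hxw']; exact hw'.1)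
  · refine subset_antisymm (fun x hx => ?_) (iUnion₂_subset fun w hw => hw.1)
    have hex := exists_cyl_word_subset hU hx
    refine mem_biUnion (x := word x (Nat.find hex)) ⟨Nat.find_spec hex, fun y hy k hk => ?_⟩
      (mem_cyl_word x _)
    rw [length_word] at hk
    rw [word_congr fun i hi => mem_cyl_word_iff.1 hy i (hi.trans hk)]
    exact Nat.find_min hex hk

lemma measure_le_of_forall_cyl_le {μ ν : Measure CS} [ν.OuterRegular]
    (h : ∀ w, μ (cyl w) ≤ ν (cyl w)) : μ ≤ ν := by
  refine Measure.le_iff'.2 fun s => ?_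
  rw [Set.measure_eq_iInf_isOpen s ν]
  refine le_iInf₂ fun U hsU => le_iInf fun hU => ?_
  obtain ⟨W, hW, rfl⟩ := hU.exists_pairwiseDisjoint_cyl
  have hWc : W.Countable := W.to_countable
  calc μ s ≤ μ (⋃ w ∈ W, cyl w) := measure_mono hsU
    _ = ∑' w : W, μ (cyl w) := measure_biUnion hWc hW fun w _ => measurableSet_cyl w
    _ ≤ ∑' w : W, ν (cyl w) := ENNReal.tsum_le_tsum fun w => h w
    _ = ν (⋃ w ∈ W, cyl w) := (measure_biUnion hWc hW fun w _ => measurableSet_cyl w).symm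

lemma measure_cyl_eq_add (μ : Measure CS) (w : List (ZMod 2)) :
    μ (cyl w) = μ (cyl (w ++ [0])) + μ (cyl (w ++ [1])) := by
  rw [cyl_eq_union w]
  exact measure_union (disjoint_cyl_append w) (measurableSet_cyl _)

section Branching

variable {Q : Set CS} {w : List (ZMod 2)}

lemma branch_of_ne {c c' : ZMod 2} (h : c ≠ c') (hc : (cyl (w ++ [c]) ∩ Q).Nonempty)
    (hc' : (cyl (w ++ [c']) ∩ Q).Nonempty) : Branch Q w := by
  rcases zmod_two_eq_zero_or_eq_one c with rfl | rfl <;>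
    rcases zmod_two_eq_zero_or_eq_one c' with rfl | rfl
  exacts [absurd rfl h, ⟨hc, hc'⟩, ⟨hc', hc⟩, absurd rfl h]

lemma Branch.mono {P : Set CS} (hw : Branch Q w) (hQP : Q ⊆ P) : Branch P w :=
  ⟨hw.1.mono (inter_subset_inter_right _ hQP), hw.2.mono (inter_subset_inter_right _ hQP)⟩

lemma inter_nonempty_cyl_append_of_branch (hw : Branch Q w) (b : ZMod 2) :
    (cyl (w ++ [b]) ∩ Q).Nonempty := by
  rcases zmod_two_eq_zero_or_eq_one b with rfl | rfl
  exacts [hw.1, hw.2]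

lemma cyl_inter_subset_of_not_branch {b : ZMod 2} (hw : ¬ Branch Q w)
    (hb : (cyl (w ++ [b]) ∩ Q).Nonempty) : cyl w ∩ Q ⊆ cyl (w ++ [b]) := by
  rintro x ⟨hxw, hxQ⟩
  by_contra hxb
  exact hw (branch_of_ne (c := x w.length) (fun h => hxb (mem_cyl_append_iff.2 ⟨hxw, h⟩))
    ⟨x, mem_cyl_append_iff.2 ⟨hxw, rfl⟩, hxQ⟩ hb)

end Branching

namespace IsCanonical

variable {P Q : Set CS} {νP νQ : Measure CS}

lemma two_mul_measure_cyl_append (hν : IsCanonical P νP) {w : List (ZMod 2)} (hw : Branch P w)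
    (b : ZMod 2) : 2 * νP (cyl (w ++ [b])) = νP (cyl w) := by
  rw [measure_cyl_eq_add νP w, two_mul]
  rcases zmod_two_eq_zero_or_eq_one b with rfl | rfl <;> rw [hν.2.2 w hw]

lemma measure_inter_eq (hν : IsCanonical Q νQ) (hQ : MeasurableSet Q) (s : Set CS) :
    νQ (s ∩ Q) = νQ s :=
  measure_inter_conull (have := hν.1; (prob_compl_eq_zero_iff hQ).2 hν.2.1)

lemma measure_cyl_le (hνP : IsCanonical P νP) (hνQ : IsCanonical Q νQ) (hQ : MeasurableSet Q)
    (hQP : Q ⊆ P) : ∀ w, (cyl w ∩ Q).Nonempty → νP (cyl w) ≤ νQ (cyl w) := by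
  intro w
  induction w using List.reverseRecOn with
  | nil =>
    intro _
    have := hνP.1
    have := hνQ.1
    simp [cyl_nil]
  | append_singleton u b ih =>
    intro hub
    have hu := ih (hub.mono (inter_subset_inter_left _ (cyl_append_subset u b)))
    by_cases hbr : Branch Q u
    · refine (ENNReal.mul_le_mul_iff_right two_ne_zero ENNReal.ofNat_ne_top).1 ?_
      rwa [hνP.two_mul_measure_cyl_append (hbr.mono hQP), hνQ.two_mul_measure_cyl_append hbr]
    · calc νP (cyl (u ++ [b])) ≤ νP (cyl u) := measure_mono (cyl_append_subset u b)
        _ ≤ νQ (cyl u) := hu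
        _ = νQ (cyl u ∩ Q) := (hνQ.measure_inter_eq hQ _).symm
        _ ≤ νQ (cyl (u ++ [b])) := measure_mono (cyl_inter_subset_of_not_branch hbr hub)

lemma restrict_le (hνP : IsCanonical P νP) (hνQ : IsCanonical Q νQ) (hQ : MeasurableSet Q)
    (hQP : Q ⊆ P) : νP.restrict Q ≤ νQ := by
  have := hνQ.1
  refine measure_le_of_forall_cyl_le fun w => ?_
  rw [Measure.restrict_apply' hQ]
  rcases (cyl w ∩ Q).eq_empty_or_nonempty with h | h
  · simp [h]
  · exact (measure_mono inter_subset_left).trans (hνP.measure_cyl_le hνQ hQ hQP w h)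

lemma measure_le_of_subset (hνP : IsCanonical P νP) (hνQ : IsCanonical Q νQ)
    (hQ : MeasurableSet Q) (hQP : Q ⊆ P) {A : Set CS} (hA : A ⊆ Q) : νP A ≤ νQ A := by
  calc νP A = νP.restrict Q A := by rw [Measure.restrict_apply' hQ, inter_eq_left.2 hA]
    _ ≤ νQ A := Measure.le_iff'.1 (hνP.restrict_le hνQ hQ hQP) A

end IsCanonical

section Walk

variable (Q : Set CS)

open Classical in
noncomputable def followBit (w : List (ZMod 2)) (b : ZMod 2) : ZMod 2 :=
  if Branch Q w then b else if (cyl (w ++ [0]) ∩ Q).Nonempty then 0 else 1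

noncomputable def walk (x : CS) : ℕ → List (ZMod 2)
  | 0 => []
  | n + 1 => walk x n ++ [followBit Q (walk x n) (x n)]

noncomputable def follow (x : CS) : CS := fun n => followBit Q (walk Q x n) (x n)

lemma word_follow (x : CS) (n : ℕ) : word (follow Q x) n = walk Q x n := by
  induction n with
  | zero => rfl
  | succ n ih => rw [word_succ, ih]; rfl

lemma walk_congr {x y : CS} {n : ℕ} (h : ∀ i < n, x i = y i) : walk Q x n = walk Q y n := by
  induction n with
  | zero => rfl
  | succ n ih => simp only [walk, ih fun i hi => h i (by omega), h n n.lt_succ_self]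

variable {Q}

lemma inter_nonempty_cyl_append_followBit {w : List (ZMod 2)} (hw : (cyl w ∩ Q).Nonempty)
    (b : ZMod 2) : (cyl (w ++ [followBit Q w b]) ∩ Q).Nonempty := by
  unfold followBit
  split_ifs with hbr h₀
  · exact inter_nonempty_cyl_append_of_branch hbr b
  · exact h₀
  · rw [cyl_eq_union, union_inter_distrib_right, union_nonempty] at hw
    exact hw.resolve_left h₀

lemma inter_nonempty_cyl_walk (hne : Q.Nonempty) (x : CS) (n : ℕ) :
    (cyl (walk Q x n) ∩ Q).Nonempty := by
  induction n with
  | zero => simpa [walk, cyl_nil] using hne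
  | succ n ih => exact inter_nonempty_cyl_append_followBit ih (x n)

lemma follow_mem (hQ : IsClosed Q) (hne : Q.Nonempty) (x : CS) : follow Q x ∈ Q := by
  refine hQ.closure_subset (mem_closure_iff.2 fun U hU hxU => ?_)
  obtain ⟨n, hn⟩ := exists_cyl_word_subset hU hxU
  rw [word_follow] at hn
  exact (inter_nonempty_cyl_walk hne x n).mono (inter_subset_inter_left _ hn)

lemma continuous_follow : Continuous (follow Q) := by
  refine continuous_pi fun n => IsLocallyConstant.continuous <|
    (IsLocallyConstant.iff_exists_open _).2 fun x =>
      ⟨cyl (word x (n + 1)), isOpen_cyl _, mem_cyl_word x _, fun y hy => ?_⟩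
  rw [mem_cyl_word_iff] at hy
  simp only [follow]
  rw [walk_congr Q fun i hi => hy i (by omega), hy n n.lt_succ_self]

lemma preimage_follow_cyl_append {w : List (ZMod 2)} (hw : Branch Q w) (b : ZMod 2) :
    follow Q ⁻¹' cyl (w ++ [b]) = {x | walk Q x w.length = w ∧ x w.length = b} := by
  ext x
  simp only [mem_preimage, mem_cyl_iff_word_eq, word_follow, List.length_append,
    List.length_singleton, walk, mem_ofPred_eq]
  constructor
  · intro h
    obtain ⟨h₁, h₂⟩ := List.append_inj' h rfl
    rw [List.singleton_inj, h₁, followBit, if_pos hw] at h₂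
    exact ⟨h₁, h₂⟩
  · rintro ⟨h₁, h₂⟩
    rw [h₁, followBit, if_pos hw, h₂]

end Walk

theorem exists_isCanonical {Q : Set CS} (hQ : IsClosed Q) (hne : Q.Nonempty) :
    ∃ ν, IsCanonical Q ν := by
  set μ : Measure CS := Measure.addHaarMeasure ⊤
  have : IsProbabilityMeasure μ :=
    ⟨by simpa using Measure.addHaarMeasure_self (K₀ := (⊤ : TopologicalSpace.PositiveCompacts CS))⟩
  have hf : Measurable (follow Q) := continuous_follow.measurable
  refine ⟨μ.map (follow Q), Measure.isProbabilityMeasure_map hf.aemeasurable, ?_, fun w hw => ?_⟩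
  · have hQ_univ : follow Q ⁻¹' Q = univ := eq_univ_of_forall (follow_mem hQ hne)
    rw [Measure.map_apply hf hQ.measurableSet, hQ_univ, measure_univ]
  rw [Measure.map_apply hf (measurableSet_cyl _), Measure.map_apply hf (measurableSet_cyl _),
    preimage_follow_cyl_append hw, preimage_follow_cyl_append hw]
  -- translating by the indicator of `w.length` flips that coin and fixes the earlier ones
  conv_rhs => rw [← measure_preimage_add μ (Pi.single w.length 1)]
  congr 1
  ext x
  have hwalk : walk Q (Pi.single w.length 1 + x) w.length = walk Q x w.length :=
    walk_congr Q fun i hi => by simp [hi.ne]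
  simp [hwalk]

theorem stmt_0_general (P Q : Set CS) (hQ : PerfSet Q) (hQP : Q ⊆ P)
    (A : Set CS) (hA : A ⊆ Q) :
    (∀ νP νQ : Measure CS, IsCanonical P νP → IsCanonical Q νQ → νP A ≤ νQ A) ∧
    (PNull Q A → PNull P A) := by
  have hle : ∀ νP νQ : Measure CS, IsCanonical P νP → IsCanonical Q νQ → νP A ≤ νQ A :=
    fun _ _ hνP hνQ => hνP.measure_le_of_subset hνQ hQ.1.closed.measurableSet hQP hA
  refine ⟨hle, fun hQA νP hνP => ?_⟩
  obtain ⟨νQ, hνQ⟩ := exists_isCanonical hQ.1.closed hQ.2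
  have hνQA := hQA νQ hνQ
  rw [inter_eq_left.2 hA] at hνQA
  rw [inter_eq_left.2 (hA.trans hQP)]
  exact nonpos_iff_eq_zero.1 (hνQA ▸ hle νP νQ hνP hνQ)

/-- If `Q ⊆ P` are perfect and `A ⊆ Q`, then the `μ_P`-outer measure of `A`
is at most the `μ_Q`-outer measure of `A`; in particular every `Q`-null `A ⊆ Q` is `P`-null. -/
theorem stmt_0 (P Q : Set CS) (hP : PerfSet P) (hQ : PerfSet Q) (hQP : Q ⊆ P)
    (A : Set CS) (hA : A ⊆ Q) :
    (∀ νP νQ : Measure CS, IsCanonical P νP → IsCanonical Q νQ → νP A ≤ νQ A) ∧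
    (PNull Q A → PNull P A) :=
  stmt_0_general P Q hQ hQP A hA
end

section
/- If X ⊆ 2^ω is B-null for every balanced perfect set B ⊆ 2^ω, then X is an s₀-set; in particular, every perfectly null set is an s₀-set (PN ⊆ bPN ⊆ s₀). -/
/-!
Given a perfect set `P`, choose branching nodes of `P` along a splitting scheme in which every
node of level `k + 1` is longer than every node of level `k`. The body of the scheme is a
balanced perfect set `B ⊆ P`, homeomorphic to `2^ω` via a map `h` under which the Haar measure
of `2^ω` is pushed to a canonical measure of `B`. If `X` is `B`-null, then `h⁻¹ X` is Haar-null,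
so by outer regularity it misses a closed set of positive, hence uncountable, measure; that set
contains a perfect set `D`, and `h '' D ⊆ P` is a perfect set disjoint from `X`.
-/

open MeasureTheory Set Pointwise

open Function PiNat TopologicalSpace Filter Topology

lemma firstDiff_eq_of_mem_cylinder {E : ℕ → Type*} {x y : ∀ n, E n} {n : ℕ}
    (h : x ∈ cylinder y n) (hn : x n ≠ y n) : firstDiff x y = n := by
  have hxy : x ≠ y := fun h => hn (congrFun h n)
  refine le_antisymm ?_ ((mem_cylinder_iff_le_firstDiff hxy n).1 h)
  by_contra! hlt
  exact hn (apply_eq_of_lt_firstDiff hlt)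

instance {α : Type*} [TopologicalSpace α] [DiscreteTopology α] [Nontrivial α] :
    PerfectSpace (ℕ → α) := by
  refine ⟨preperfect_iff_nhds.2 fun x _ U hU => ?_⟩
  obtain ⟨_, ⟨y, n, rfl⟩, hx, hU⟩ := (isTopologicalBasis_cylinders _).mem_nhds_iff.1 hU
  rw [← mem_cylinder_iff_eq.1 hx] at hU
  obtain ⟨a, ha⟩ := exists_ne (x n)
  exact ⟨update x n a, ⟨hU (update_mem_cylinder x n a), trivial⟩,
    fun h => ha (by simpa using congrFun h n)⟩

lemma Perfect.image_of_isClosedEmbedding {α β : Type*} [TopologicalSpace α] [TopologicalSpace β]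
    {C : Set α} {f : α → β} (hC : Perfect C) (hf : IsClosedEmbedding f) :
    Perfect (f '' C) := by
  refine ⟨hf.isClosedMap C hC.closed, ?_⟩
  rintro _ ⟨x, hx, rfl⟩
  simpa [map_principal] using (hC.acc x hx).map hf.continuous.continuousAt hf.injective

lemma exists_perfect_nonempty_disjoint_of_measure_zero {α : Type*} [TopologicalSpace α]
    [SecondCountableTopology α] [MeasurableSpace α] {μ : Measure α} [μ.OuterRegular]
    [NullSingletonClass μ] [NeZero μ] {A : Set α} (hA : μ A = 0) :
    ∃ D, Perfect D ∧ D.Nonempty ∧ Disjoint D A := by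
  obtain ⟨U, hAU, hU, hUlt⟩ :=
    A.exists_isOpen_lt_of_lt (μ univ) (hA ▸ Measure.measure_univ_pos.2 (NeZero.ne μ))
  have hUc : ¬ (Uᶜ).Countable := fun hc => by
    have := measure_univ_le_add_compl U (μ := μ)
    rw [hc.measure_zero μ, add_zero] at this
    exact (this.trans_lt hUlt).false
  obtain ⟨D, hD, hDne, hDU⟩ :=
    exists_perfect_nonempty_of_isClosed_of_not_countable hU.isClosed_compl hUc
  exact ⟨D, hD, hDne, disjoint_compl_left.mono hDU hAU⟩

lemma measure_cylinder_inter_zero_eq_one (μ : Measure CS) [μ.IsAddLeftInvariant] (σ₀ : CS)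
    (k : ℕ) : μ (cylinder σ₀ k ∩ {σ | σ k = 0}) = μ (cylinder σ₀ k ∩ {σ | σ k = 1}) := by
  rw [← measure_preimage_add μ (Pi.single k 1)]
  congr 1
  ext σ
  simp only [mem_preimage, mem_inter_iff, mem_cylinder_iff, mem_ofPred_eq, Pi.add_apply,
    Pi.single_eq_same]
  refine and_congr (forall₂_congr fun i hi => by simp [hi.ne]) ?_
  have hflip : ∀ a : ZMod 2, 1 + a = 0 ↔ a = 1 := by decide
  exact hflip (σ k)

lemma mem_cyl_iff {x : CS} {w : List (ZMod 2)} :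
    x ∈ cyl w ↔ ∀ i (h : i < w.length), x i = w[i] := by
  simp only [cyl, mem_ofPred_eq]
  exact forall₂_congr fun i h => by rw [List.getD_eq_getElem _ _ h]

lemma mem_cyl_append {x : CS} {w : List (ZMod 2)} {c : ZMod 2} :
    x ∈ cyl (w ++ [c]) ↔ x ∈ cyl w ∧ x w.length = c := by
  simp only [mem_cyl_iff, List.length_append, List.length_singleton]
  constructor
  · intro h
    refine ⟨fun i hi => by simpa [List.getElem_append_left hi] using h i (by omega), ?_⟩
    simpa using h w.length (by omega)
  · rintro ⟨hw, hc⟩ i hi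
    rcases (Nat.lt_succ_iff_lt_or_eq.1 hi) with hi | rfl
    · simpa [List.getElem_append_left hi] using hw i hi
    · simpa using hc

lemma cyl_subset_of_prefix {u v : List (ZMod 2)} (h : u <+: v) : cyl v ⊆ cyl u := by
  intro x hx
  rw [mem_cyl_iff] at hx ⊢
  intro i hi
  rw [h.getElem hi]
  exact hx i _

def pre (x : CS) (n : ℕ) : List (ZMod 2) := (List.range n).map x

@[simp] lemma length_pre (x : CS) (n : ℕ) : (pre x n).length = n := by simp [pre]

@[simp] lemma getElem_pre (x : CS) {n i : ℕ} (h : i < (pre x n).length) : (pre x n)[i] = x i := by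
  simp [pre]

lemma cyl_pre (x : CS) (n : ℕ) : cyl (pre x n) = cylinder x n := by
  ext y
  simp [mem_cyl_iff, mem_cylinder_iff]

lemma pre_length_of_mem_cyl {x : CS} {w : List (ZMod 2)} (h : x ∈ cyl w) : pre x w.length = w :=
  List.ext_getElem (by simp) fun i _ hi => by simp [mem_cyl_iff.1 h i hi]

lemma cyl_eq_cylinder_of_mem {x : CS} {w : List (ZMod 2)} (h : x ∈ cyl w) :
    cyl w = cylinder x w.length := by
  rw [← cyl_pre, pre_length_of_mem_cyl h]

lemma prefix_pre_of_mem_cyl {x : CS} {w : List (ZMod 2)} (h : x ∈ cyl w) {n : ℕ}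
    (hn : w.length ≤ n) : w <+: pre x n := by
  rw [← pre_length_of_mem_cyl h, List.prefix_iff_eq_take]
  simp [pre, ← List.map_take, List.take_range, hn]

lemma branch_of_mem_cyl_append {P : Set CS} {w : List (ZMod 2)} {a b : ZMod 2} {x y : CS}
    (hx : x ∈ cyl (w ++ [a]) ∩ P) (hy : y ∈ cyl (w ++ [b]) ∩ P) (hab : a ≠ b) : Branch P w := by
  fin_cases a <;> fin_cases b
  all_goals first | exact absurd rfl hab | exact ⟨⟨_, hx⟩, ⟨_, hy⟩⟩ | exact ⟨⟨_, hy⟩, ⟨_, hx⟩⟩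

lemma exists_branch_extending {P : Set CS} (hP : Perfect P) {w : List (ZMod 2)}
    (hw : (cyl w ∩ P).Nonempty) (N : ℕ) : ∃ v, w <+: v ∧ N ≤ v.length ∧ Branch P v := by
  obtain ⟨x, hxw, hxP⟩ := hw
  set M := max N w.length
  obtain ⟨y, ⟨hyM, hyP⟩, hyx⟩ := accPt_iff_nhds.1 (hP.acc x hxP) (cylinder x M)
    ((isOpen_cylinder _ x M).mem_nhds (self_mem_cylinder x M))
  set d := firstDiff y x
  have hMd : M ≤ d := (mem_cylinder_iff_le_firstDiff hyx M).1 hyM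
  refine ⟨pre x d, prefix_pre_of_mem_cyl hxw (le_of_max_le_right hMd),
    by simpa using le_of_max_le_left hMd, ?_⟩
  refine branch_of_mem_cyl_append ⟨?_, hxP⟩ ⟨?_, hyP⟩ (apply_firstDiff_ne hyx).symm
  · rw [mem_cyl_append, cyl_pre]
    exact ⟨self_mem_cylinder x d, by simp [d]⟩
  · rw [mem_cyl_append, cyl_pre]
    exact ⟨mem_cylinder_firstDiff y x, by simp [d]⟩

lemma Branch.nonempty_cyl_append {P : Set CS} {w : List (ZMod 2)} (hw : Branch P w) (c : ZMod 2) :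
    (cyl (w ++ [c]) ∩ P).Nonempty := by
  fin_cases c
  exacts [hw.1, hw.2]

open Classical in
noncomputable def branchExt (P : Set CS) (w : List (ZMod 2)) (N : ℕ) : List (ZMod 2) :=
  if h : ∃ v, w <+: v ∧ N ≤ v.length ∧ Branch P v then h.choose else []

lemma branchExt_spec {P : Set CS} (hP : Perfect P) {w : List (ZMod 2)}
    (hw : (cyl w ∩ P).Nonempty) (N : ℕ) :
    w <+: branchExt P w N ∧ N ≤ (branchExt P w N).length ∧ Branch P (branchExt P w N) := by
  have h := exists_branch_extending hP hw N
  rw [branchExt, dif_pos h]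
  exact h.choose_spec

/-- `node P k σ` only depends on `σ` below `k`, so the supremum over the finitely many `τ` bounds
the lengths of all level-`k` nodes: every level-`(k + 1)` node is longer than every level-`k`
node. -/
noncomputable def node (P : Set CS) : ℕ → CS → List (ZMod 2)
  | 0 => fun _ => branchExt P [] 0
  | k + 1 => fun σ => branchExt P (node P k σ ++ [σ k])
      ((Finset.univ.sup fun τ : Fin k → ZMod 2 => (node P k (extend Fin.val τ 0)).length) + 1)

lemma node_eq_of_mem_cylinder {P : Set CS} :
    ∀ {k : ℕ} {σ τ : CS}, σ ∈ cylinder τ k → node P k σ = node P k τ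
  | 0, _, _, _ => rfl
  | k + 1, σ, τ, h => by
    simp only [node]
    rw [node_eq_of_mem_cylinder (cylinder_anti τ k.le_succ h), h k k.lt_succ_self]

section scheme

variable {P : Set CS} (hP : PerfSet P)
include hP

lemma branch_node (k : ℕ) (σ : CS) : Branch P (node P k σ) := by
  induction k with
  | zero => exact (branchExt_spec hP.1 (by simpa [cyl] using hP.2) 0).2.2
  | succ k ih =>
    exact (branchExt_spec hP.1 (ih.nonempty_cyl_append (σ k)) _).2.2

lemma node_append_prefix_node_succ (k : ℕ) (σ : CS) : node P k σ ++ [σ k] <+: node P (k + 1) σ :=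
  (branchExt_spec hP.1 ((branch_node hP k σ).nonempty_cyl_append (σ k)) _).1

lemma length_node_lt_length_node_succ (k : ℕ) (σ τ : CS) :
    (node P k σ).length < (node P (k + 1) τ).length := by
  have hσ : (node P k σ).length ≤
      Finset.univ.sup fun τ' : Fin k → ZMod 2 => (node P k (extend Fin.val τ' 0)).length := by
    rw [node_eq_of_mem_cylinder (σ := σ) (τ := extend Fin.val (fun i : Fin k => σ i) 0)
      fun i hi => by
        simpa using (Fin.val_injective.extend_apply (fun i : Fin k => σ i) 0 ⟨i, hi⟩).symm]
    exact Finset.le_sup (f := fun τ' : Fin k → ZMod 2 => (node P k (extend Fin.val τ' 0)).length)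
      (Finset.mem_univ _)
  exact hσ.trans_lt (branchExt_spec hP.1 ((branch_node hP k τ).nonempty_cyl_append (τ k)) _).2.1

lemma length_node_lt_length_node {j k : ℕ} (h : j < k) (σ τ : CS) :
    (node P j σ).length < (node P k τ).length := by
  induction k, h using Nat.le_induction generalizing τ with
  | base => exact length_node_lt_length_node_succ hP j σ τ
  | succ k _ ih => exact (ih τ).trans (length_node_lt_length_node_succ hP k τ τ)

lemma le_length_node (k : ℕ) (σ : CS) : k ≤ (node P k σ).length := by
  induction k with
  | zero => exact Nat.zero_le _
  | succ k ih => exact ih.trans_lt (length_node_lt_length_node_succ hP k σ σ)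

lemma node_prefix_node {j k : ℕ} (h : j ≤ k) (σ : CS) : node P j σ <+: node P k σ := by
  induction k, h using Nat.le_induction with
  | base => exact List.prefix_refl _
  | succ k _ ih =>
    exact ih.trans ((List.prefix_append _ _).trans (node_append_prefix_node_succ hP k σ))

end scheme

/-- The common extension of all `node P k σ`: coordinate `n` is read off level `n + 1`, which has
length `> n`. -/
noncomputable def embed (P : Set CS) (σ : CS) : CS := fun n => (node P (n + 1) σ).getD n 0

section embed

variable {P : Set CS} (hP : PerfSet P)
include hP

lemma embed_mem_cyl_node (k : ℕ) (σ : CS) : embed P σ ∈ cyl (node P k σ) := by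
  rw [mem_cyl_iff]
  intro i hi
  have hi' : i < (node P (i + 1) σ).length := (le_length_node hP (i + 1) σ)
  rw [embed, List.getD_eq_getElem _ _ hi']
  rcases le_total k (i + 1) with h | h
  · exact ((node_prefix_node hP h σ).getElem hi).symm
  · exact (node_prefix_node hP h σ).getElem hi'

lemma embed_mem_cyl_node_append (k : ℕ) (σ : CS) : embed P σ ∈ cyl (node P k σ ++ [σ k]) :=
  cyl_subset_of_prefix (node_append_prefix_node_succ hP k σ) (embed_mem_cyl_node hP (k + 1) σ)

lemma embed_apply_length_node (k : ℕ) (σ : CS) : embed P σ (node P k σ).length = σ k :=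
  (mem_cyl_append.1 (embed_mem_cyl_node_append hP k σ)).2

lemma mem_cylinder_of_embed_mem_cyl_node {k : ℕ} {σ τ : CS} (h : embed P σ ∈ cyl (node P k τ)) :
    σ ∈ cylinder τ k := by
  induction k with
  | zero => exact mem_cylinder_iff.2 fun _ hi => absurd hi (Nat.not_lt_zero _)
  | succ k ih =>
    have hk := mem_cyl_append.1 (cyl_subset_of_prefix (node_append_prefix_node_succ hP k τ) h)
    have hστ := ih hk.1
    rw [← node_eq_of_mem_cylinder hστ, embed_apply_length_node hP] at hk
    intro i hi
    rcases Nat.lt_succ_iff_lt_or_eq.1 hi with hi | rfl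
    exacts [hστ i hi, hk.2]

lemma embed_mem (σ : CS) : embed P σ ∈ P := by
  choose x hx hxP using fun n => (branch_node hP n σ).1
  have hlim : Tendsto x atTop (𝓝 (embed P σ)) := by
    refine tendsto_pi_nhds.2 fun i => tendsto_nhds_of_eventually_eq
      (eventually_atTop.2 ⟨i + 1, fun n hn => ?_⟩)
    have hlt : i < (node P n σ).length := (le_length_node hP n σ).trans_lt' (by omega)
    rw [mem_cyl_iff.1 (cyl_subset_of_prefix (List.prefix_append _ _) (hx n)) i hlt,
      mem_cyl_iff.1 (embed_mem_cyl_node hP n σ) i hlt]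
  exact hP.1.closed.mem_of_tendsto hlim (.of_forall hxP)

lemma embed_injective : Injective (embed P) := by
  intro σ τ h
  funext n
  exact mem_cylinder_of_embed_mem_cyl_node hP (h ▸ embed_mem_cyl_node hP (n + 1) τ) n n.lt_succ_self

omit hP in
lemma continuous_embed : Continuous (embed P) := by
  refine continuous_pi fun n => continuous_iff_continuousAt.2 fun σ => ?_
  refine (continuousAt_const (y := embed P σ n)).congr (eventually_of_mem
    ((isOpen_cylinder _ σ (n + 1)).mem_nhds (self_mem_cylinder σ (n + 1))) fun τ hτ => ?_)
  simp only [embed, node_eq_of_mem_cylinder hτ]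

lemma isClosedEmbedding_embed : IsClosedEmbedding (embed P) :=
  continuous_embed.isClosedEmbedding (embed_injective hP)

end embed

section branching

variable {P : Set CS} (hP : PerfSet P)
include hP

lemma strictMono_length_node (σ : CS) : StrictMono fun k => (node P k σ).length :=
  fun _ _ h => length_node_lt_length_node hP h σ σ

lemma firstDiff_embed {ρ σ : CS} (h : ρ ≠ σ) :
    firstDiff (embed P ρ) (embed P σ) = (node P (firstDiff ρ σ) σ).length := by
  have hnode := node_eq_of_mem_cylinder (P := P) (mem_cylinder_firstDiff ρ σ)
  refine firstDiff_eq_of_mem_cylinder ?_ ?_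
  · rw [← cyl_eq_cylinder_of_mem (embed_mem_cyl_node hP _ σ), ← hnode]
    exact embed_mem_cyl_node hP _ ρ
  · rw [← hnode, embed_apply_length_node hP, hnode, embed_apply_length_node hP]
    exact apply_firstDiff_ne h

lemma eq_node_of_branch_range {u : List (ZMod 2)} (hu : Branch (range (embed P)) u) {σ : CS}
    (hσ : embed P σ ∈ cyl u) : ∃ k, u = node P k σ := by
  obtain ⟨ρ, hρu, hρσ⟩ : ∃ ρ, embed P ρ ∈ cyl u ∧ embed P ρ u.length ≠ embed P σ u.length := by
    obtain ⟨_, h0, ρ0, rfl⟩ := hu.1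
    obtain ⟨_, h1, ρ1, rfl⟩ := hu.2
    rw [mem_cyl_append] at h0 h1
    by_cases hσ0 : embed P σ u.length = 0
    · exact ⟨ρ1, h1.1, by rw [h1.2, hσ0]; decide⟩
    · exact ⟨ρ0, h0.1, by rw [h0.2]; exact Ne.symm hσ0⟩
  have hlen : u.length = (node P (firstDiff ρ σ) σ).length := by
    rw [← firstDiff_embed hP (fun h => hρσ (by rw [h]))]
    exact (firstDiff_eq_of_mem_cylinder (cyl_eq_cylinder_of_mem hσ ▸ hρu) hρσ).symm
  refine ⟨firstDiff ρ σ, ?_⟩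
  rw [← pre_length_of_mem_cyl hσ, ← pre_length_of_mem_cyl (embed_mem_cyl_node hP _ σ), hlen]

lemma branch_range_node (k : ℕ) (σ : CS) : Branch (range (embed P)) (node P k σ) := by
  have key : ∀ c, embed P (update σ k c) ∈ cyl (node P k σ ++ [c]) := fun c => by
    simpa [node_eq_of_mem_cylinder (update_mem_cylinder σ k c)]
      using embed_mem_cyl_node_append hP k (update σ k c)
  exact ⟨⟨_, key 0, mem_range_self _⟩, ⟨_, key 1, mem_range_self _⟩⟩

lemma brCount_range_node (k : ℕ) (σ : CS) : brCount (range (embed P)) (node P k σ) = k := by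
  have hset : {u | u <+: node P k σ ∧ u ≠ node P k σ ∧ Branch (range (embed P)) u} =
      (fun j => node P j σ) '' Iio k := by
    ext u
    constructor
    · rintro ⟨hpre, hne, hbr⟩
      obtain ⟨j, rfl⟩ := eq_node_of_branch_range hP hbr
        (cyl_subset_of_prefix hpre (embed_mem_cyl_node hP k σ))
      refine ⟨j, (strictMono_length_node hP σ).lt_iff_lt.1 ?_, rfl⟩
      exact lt_of_le_of_ne hpre.length_le fun h => hne (hpre.eq_of_length h)
    · rintro ⟨j, hj, rfl⟩
      exact ⟨node_prefix_node hP (le_of_lt hj) σ,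
        fun h => (strictMono_length_node hP σ hj).ne (congrArg List.length h),
        branch_range_node hP j σ⟩
  rw [brCount, hset, ncard_image_of_injective _ (strictMono_length_node hP σ).injective.of_comp,
    ← Finset.coe_range, ncard_coe_finset, Finset.card_range]

lemma balancedPerf_range_embed : BalancedPerf (range (embed P)) := by
  have hperf : Perfect (range (embed P)) := by
    simpa using (PerfectSpace.univ_perfect (α := CS)).image_of_isClosedEmbedding
      (isClosedEmbedding_embed hP)
  refine ⟨⟨hperf, range_nonempty _⟩, ?_⟩
  intro v w hv hw hlt
  obtain ⟨_, hx, ρ, rfl⟩ := hv.1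
  obtain ⟨j, rfl⟩ := eq_node_of_branch_range hP hv (mem_cyl_append.1 hx).1
  obtain ⟨_, hy, τ, rfl⟩ := hw.1
  obtain ⟨l, rfl⟩ := eq_node_of_branch_range hP hw (mem_cyl_append.1 hy).1
  rw [brCount_range_node hP, brCount_range_node hP] at hlt
  exact length_node_lt_length_node hP hlt ρ τ

end branching

noncomputable def cantorHaar : Measure CS := Measure.addHaarMeasure ⊤

instance : cantorHaar.IsAddHaarMeasure := by unfold cantorHaar; infer_instance

instance : cantorHaar.Regular := by unfold cantorHaar; infer_instance

instance : IsProbabilityMeasure cantorHaar :=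
  ⟨by simpa [cantorHaar] using Measure.addHaarMeasure_self (K₀ := (⊤ : PositiveCompacts CS))⟩

section canonical

variable {P : Set CS} (hP : PerfSet P)
include hP

lemma preimage_embed_cyl_node_append (k : ℕ) (σ₀ : CS) (b : ZMod 2) :
    embed P ⁻¹' cyl (node P k σ₀ ++ [b]) = cylinder σ₀ k ∩ {σ | σ k = b} := by
  ext σ
  constructor
  · intro h
    have hσ := mem_cylinder_of_embed_mem_cyl_node hP
      (mem_cyl_append.1 h).1
    refine ⟨hσ, ?_⟩
    rw [mem_preimage, mem_cyl_append, ← node_eq_of_mem_cylinder hσ,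
      embed_apply_length_node hP] at h
    exact h.2
  · rintro ⟨hσ, rfl⟩
    rw [mem_preimage, ← node_eq_of_mem_cylinder hσ]
    exact embed_mem_cyl_node_append hP k σ

lemma isCanonical_map_embed : IsCanonical (range (embed P)) (cantorHaar.map (embed P)) := by
  have hemb := (isClosedEmbedding_embed hP).measurableEmbedding
  refine ⟨Measure.isProbabilityMeasure_map hemb.measurable.aemeasurable, ?_, fun w hw => ?_⟩
  · rw [hemb.map_apply, preimage_range, measure_univ]
  · obtain ⟨_, hx, σ, rfl⟩ := hw.1
    obtain ⟨k, rfl⟩ := eq_node_of_branch_range hP hw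
      (mem_cyl_append.1 hx).1
    rw [hemb.map_apply, hemb.map_apply, preimage_embed_cyl_node_append hP,
      preimage_embed_cyl_node_append hP, measure_cylinder_inter_zero_eq_one]

end canonical

theorem s0Set_of_forall_balancedPerf_pNull {X : Set CS}
    (hX : ∀ B, BalancedPerf B → PNull B X) : S0Set X := by
  rintro P hP
  have hemb := isClosedEmbedding_embed hP
  have hnull : cantorHaar (embed P ⁻¹' X) = 0 := by
    simpa [hemb.measurableEmbedding.map_apply] using
      hX _ (balancedPerf_range_embed hP) _ (isCanonical_map_embed hP)
  obtain ⟨D, hD, hDne, hDX⟩ := exists_perfect_nonempty_disjoint_of_measure_zero hnull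
  refine ⟨embed P '' D, ⟨hD.image_of_isClosedEmbedding hemb, hDne.image _⟩,
    image_subset_iff.2 fun σ _ => embed_mem hP σ, ?_⟩
  rw [← disjoint_iff_inter_eq_empty, disjoint_image_left]
  exact hDX

/-- If `X` is `B`-null for every balanced perfect set `B`, then `X` is an
`s₀`-set; in particular every perfectly null set is an `s₀`-set. -/
theorem stmt_9 :
    (∀ X : Set CS, (∀ B, BalancedPerf B → PNull B X) → S0Set X) ∧
    (∀ X : Set CS, PerfectlyNull X → S0Set X) :=
  ⟨fun _ => s0Set_of_forall_balancedPerf_pNull,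
    fun _ hX => s0Set_of_forall_balancedPerf_pNull fun B hB => hX B hB.1⟩
end
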